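/- arXiv:1606.06580 — 4 statements merged into one kernel-verified Lean document; each statement's English description precedes it below -/
import Mathlib

section
/- For n = 2 players, if one player (Bob) uses protocol f, then for every acknowledgment-based protocol g for the other player (Alice), Alice's unconditional expected latency under the profile (g, f) is at least 3. -/
open scoped ENNReal

namespace Contention

/-- An acknowledgment-based protocol: maps a player's personal transmission history
(the list of her own past transmission indicators, oldest slot first) to the
probability of transmitting in the next slot. -/
abbrev Protocol : Type := List Bool → ℝ

/-- A protocol is valid if it always prescribes a probability in `[0,1]`. -/
def ValidProtocol (f : Protocol) : Prop := ∀ h : List Bool, 0 ≤ f h ∧ f h ≤ 1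

/-- A joint transmission history: the list of transmission vectors, oldest slot first. -/
abbrev Hist (n : ℕ) : Type := List (Fin n → Bool)

/-- The personal transmission history of player `i` extracted from a joint history. -/
def personal {n : ℕ} (h : Hist n) (i : Fin n) : List Bool := h.map fun v => v i

/-- Player `i` transmits alone (hence successfully) in the slot with transmission vector `v`. -/
def alone {n : ℕ} (v : Fin n → Bool) (i : Fin n) : Prop :=
  v i = true ∧ ∀ j : Fin n, j ≠ i → v j = false

instance {n : ℕ} (v : Fin n → Bool) (i : Fin n) : Decidable (alone v i) := by
  unfold alone; infer_instance

/-- Player `i` is still pending after joint history `h` (she never transmitted alone). -/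
def pending {n : ℕ} (h : Hist n) (i : Fin n) : Prop := ∀ v ∈ h, ¬ alone v i

instance {n : ℕ} (h : Hist n) (i : Fin n) : Decidable (pending h i) := by
  unfold pending; infer_instance

/-- Probability that the next slot has transmission vector `v`, given joint history `h`:
each pending player transmits independently with the probability her protocol assigns to
her personal history, and players that already succeeded stay quiet. -/
noncomputable def stepProb {n : ℕ} (F : Fin n → Protocol) (h : Hist n) (v : Fin n → Bool) : ℝ :=
  ∏ i : Fin n,
    if pending h i then
      (if v i = true then F i (personal h i) else 1 - F i (personal h i))
    else
      (if v i = true then 0 else 1)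

/-- Probability that, starting after joint history `h`, the next `e.length` slots produce
exactly the extension `e`. -/
noncomputable def contProb {n : ℕ} (F : Fin n → Protocol) (h e : Hist n) : ℝ :=
  ∏ t ∈ Finset.range e.length, stepProb F (h ++ e.take t) (e.getD t fun _ => false)

/-- Probability that the first `h.length` slots produce exactly the joint history `h`. -/
noncomputable def histProb {n : ℕ} (F : Fin n → Protocol) (h : Hist n) : ℝ := contProb F [] h

/-- Conditional probability, given joint history `h`, that player `i` is still pending
after `s` further slots. -/
noncomputable def condPendProb {n : ℕ} (F : Fin n → Protocol) (h : Hist n) (i : Fin n)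
    (s : ℕ) : ℝ :=
  ∑ e : Fin s → Fin n → Bool,
    if pending (h ++ List.ofFn e) i then contProb F h (List.ofFn e) else 0

/-- Conditional expected latency `E[Tᵢ | h]` of player `i` given joint history `h`
(`Tᵢ` is the first slot in which `i` transmits alone), computed via
`E[Tᵢ | h] = ∑_{s ≥ 0} Pr(Tᵢ > s | h)`; for `s ≤ h.length` the event `Tᵢ > s` is
determined by `h`, and for larger `s` its probability is `condPendProb`. -/
noncomputable def condLatency {n : ℕ} (F : Fin n → Protocol) (h : Hist n) (i : Fin n) : ℝ≥0∞ :=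
  ∑' s : ℕ,
    if s ≤ h.length then (if pending (h.take s) i then 1 else 0)
    else ENNReal.ofReal (condPendProb F h i (s - h.length))

/-- Conditional expected number of further slots until player `i` succeeds, given joint
history `h` (the slot of the successful transmission itself is counted). -/
noncomputable def condRemaining {n : ℕ} (F : Fin n → Protocol) (h : Hist n) (i : Fin n) : ℝ≥0∞ :=
  ∑' s : ℕ, ENNReal.ofReal (condPendProb F h i s)

/-- A profile of protocols is in equilibrium if after no joint history (arising with
positive probability) can a player strictly decrease her conditional expected latency
by unilaterally switching to another (valid) protocol. -/
def IsEquilibrium {n : ℕ} (F : Fin n → Protocol) : Prop :=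
  ∀ i : Fin n, ∀ h : Hist n, 0 < histProb F h →
    ∀ g : Protocol, ValidProtocol g →
      condLatency F h i ≤ condLatency (Function.update F i g) h i

end Contention

namespace Contention

/-- The two-player protocol `f`: transmit with probability `2/3` in the first slot and in
any slot immediately following one's own transmission (`X_{i,t-1} = 1`), and with
probability `1` in any slot immediately following one's own quiet slot (`X_{i,t-1} = 0`). -/
noncomputable def fTwo : Protocol := fun h =>
  match h.getLast? with
  | none => 2/3
  | some true => 2/3
  | some false => 1

end Contention

/-!
Alice only sees her own history `a`. For each `a`, the probability that Alice is still pending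
with history `a` splits according to Bob's phase: done, pending and transmitting next with
probability `2/3`, or pending and transmitting next surely. This vector evolves linearly when
Alice extends `a` by one slot. The potential `3·sent + min (done + 4·quiet) (2·done + 2·quiet)`
is a lower bound for Alice's expected remaining latency, and in each slot it drops by at most the
probability that Alice is still pending. It starts at `3`, and it is at most `4` times the
pending probability. Summing over slots, the expected latency is therefore at least `3`.
-/

namespace Contention

lemma ofReal_le_tsum_ofReal_of_le_sum_range_add {u : ℕ → ℝ} (hu : ∀ n, 0 ≤ u n) {c K : ℝ}
    (h : ∀ N, c ≤ ∑ s ∈ Finset.range N, u s + K * u N) :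
    ENNReal.ofReal c ≤ ∑' s, ENNReal.ofReal (u s) := by
  by_cases hsum : Summable u
  · rw [← ENNReal.ofReal_tsum_of_nonneg hu hsum]
    refine ENNReal.ofReal_le_ofReal (ge_of_tendsto' (x := Filter.atTop) ?_ h)
    simpa using hsum.hasSum.tendsto_sum_nat.add (hsum.tendsto_atTop_zero.const_mul K)
  · convert le_top
    by_contra hne
    exact hsum (by simpa [hu] using ENNReal.summable_toReal hne)

lemma sum_fun_fin_succ {α M : Type*} [Fintype α] [AddCommMonoid M] {s : ℕ}
    (f : (Fin (s + 1) → α) → M) :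
    ∑ a, f a = ∑ a : Fin s → α, ∑ x, f (Fin.snoc a x) := by
  rw [← (Fin.snocEquiv fun _ => α).sum_comp, Fintype.sum_prod_type_right]
  rfl

lemma sum_fun_fin_two {ι α M : Type*} [Fintype ι] [DecidableEq ι] [Fintype α]
    [AddCommMonoid M] (f : (ι → Fin 2 → α) → M) :
    ∑ e, f e = ∑ a : ι → α, ∑ b : ι → α, f fun t => ![a t, b t] := by
  rw [← Fintype.sum_prod_type']
  exact (Fintype.sum_equiv ((Equiv.arrowProdEquivProdArrow _ _ _).symm.trans
    (Equiv.arrowCongr (Equiv.refl _) (finTwoArrowEquiv α).symm)) _ _ fun _ => rfl).symm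

section Game

variable {n : ℕ}

def coin (p : ℝ) (x : Bool) : ℝ := if x then p else 1 - p

lemma stepProb_eq_prod_coin (F : Fin n → Protocol) (h : Hist n) (v : Fin n → Bool) :
    stepProb F h v = ∏ i, coin (if pending h i then F i (personal h i) else 0) (v i) := by
  refine Finset.prod_congr rfl fun i _ => ?_
  unfold coin
  split_ifs <;> simp

lemma stepProb_nonneg {F : Fin n → Protocol} (hF : ∀ i, ValidProtocol (F i)) (h : Hist n)
    (v : Fin n → Bool) : 0 ≤ stepProb F h v :=
  Finset.prod_nonneg fun i _ => by
    have := hF i (personal h i)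
    split_ifs <;> linarith

lemma histProb_nonneg {F : Fin n → Protocol} (hF : ∀ i, ValidProtocol (F i)) (h : Hist n) :
    0 ≤ histProb F h := by
  unfold histProb contProb
  exact Finset.prod_nonneg fun _ _ => stepProb_nonneg hF _ _

lemma histProb_append (F : Fin n → Protocol) (h : Hist n) (v : Fin n → Bool) :
    histProb F (h ++ [v]) = histProb F h * stepProb F h v := by
  simp only [histProb, contProb, List.nil_append, List.length_append, List.length_singleton,
    Finset.prod_range_succ]
  congr 1
  · refine Finset.prod_congr rfl fun t ht => ?_
    rw [Finset.mem_range] at ht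
    rw [List.take_append_of_le_length ht.le, List.getD_append _ _ _ _ ht]
  · simp

lemma condPendProb_nonneg {F : Fin n → Protocol} (hF : ∀ i, ValidProtocol (F i)) (i : Fin n)
    (s : ℕ) : 0 ≤ condPendProb F [] i s :=
  Finset.sum_nonneg fun _ _ => by
    split_ifs
    exacts [histProb_nonneg hF _, le_rfl]

lemma condLatency_nil (F : Fin n → Protocol) (i : Fin n) :
    condLatency F [] i = condRemaining F [] i := by
  refine tsum_congr fun s => ?_
  rcases s with _ | s
  · simp [condPendProb, contProb, pending]
  · simp

lemma personal_append (h : Hist n) (v : Fin n → Bool) (i : Fin n) :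
    personal (h ++ [v]) i = personal h i ++ [v i] := by
  simp [personal]

lemma pending_append (h : Hist n) (v : Fin n → Bool) (i : Fin n) :
    pending (h ++ [v]) i ↔ pending h i ∧ ¬ alone v i := by
  simp [pending, or_imp, forall_and]

end Game

lemma alone_zero_iff (x y : Bool) : alone ![x, y] 0 ↔ x = true ∧ y = false := by
  simp [alone, Fin.forall_fin_two]

lemma alone_one_iff (x y : Bool) : alone ![x, y] 1 ↔ y = true ∧ x = false := by
  simp [alone, Fin.forall_fin_two]

lemma validProtocol_fTwo : ValidProtocol fTwo := fun h => by
  unfold fTwo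
  rcases h.getLast? with _ | _ | _ <;> norm_num

noncomputable def vsFTwo (g : Protocol) : Fin 2 → Protocol := fun i => if i = 0 then g else fTwo

lemma validProtocol_vsFTwo {g : Protocol} (hg : ValidProtocol g) (i : Fin 2) :
    ValidProtocol (vsFTwo g i) := by
  unfold vsFTwo
  split_ifs
  exacts [hg, validProtocol_fTwo]

/-- Bob's situation while Alice is pending. `bobSent` also covers the first slot, in which
`fTwo` behaves as after a transmission. -/
inductive Phase
  | bobDone
  | bobSent
  | bobQuiet
  deriving DecidableEq

namespace Phase

noncomputable def bobProb : Phase → ℝ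
  | bobDone => 0
  | bobSent => 2/3
  | bobQuiet => 1

def next : Phase → Bool → Bool → Option Phase
  | bobDone, true, false => none
  | bobDone, _, _ => some bobDone
  | _, true, true => some bobSent
  | _, true, false => none
  | _, false, true => some bobDone
  | _, false, false => some bobQuiet

end Phase

open Phase

def phase (h : Hist 2) : Option Phase :=
  if pending h 0 then
    if pending h 1 then
      if (personal h 1).getLast? = some false then some bobQuiet else some bobSent
    else some bobDone
  else none

lemma phase_eq_none_iff (h : Hist 2) : phase h = none ↔ ¬ pending h 0 := by
  unfold phase
  split_ifs <;> simp_all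

lemma phase_append (h : Hist 2) (x y : Bool) :
    phase (h ++ [![x, y]]) = (phase h).bind fun c => c.next x y := by
  have hlast : (personal (h ++ [![x, y]]) 1).getLast? = some y := by
    simp [personal_append]
  unfold phase
  simp only [pending_append, alone_zero_iff, alone_one_iff, hlast]
  by_cases h0 : pending h 0 <;> by_cases h1 : pending h 1 <;>
    by_cases hl : (personal h 1).getLast? = some false <;> cases x <;> cases y <;>
    simp [h0, h1, hl, Phase.next]

lemma bobProb_of_phase_eq_some {h : Hist 2} {c : Phase} (hc : phase h = some c) :
    (if pending h 1 then fTwo (personal h 1) else 0) = c.bobProb := by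
  unfold phase at hc
  unfold fTwo
  split_ifs at hc with h0 h1 hl <;> cases hc
  · simp [h1, hl, bobProb]
  · rcases hb : (personal h 1).getLast? with _ | _ | _ <;> simp_all [bobProb]
  · simp [h1, bobProb]

lemma stepProb_vsFTwo {g : Protocol} {h : Hist 2} {c : Phase} (hc : phase h = some c)
    (x y : Bool) :
    stepProb (vsFTwo g) h ![x, y] = coin (g (personal h 0)) x * coin c.bobProb y := by
  have h0 : pending h 0 := by
    by_contra h0
    rw [← phase_eq_none_iff] at h0
    simp [h0] at hc
  rw [stepProb_eq_prod_coin, Fin.prod_univ_two, ← bobProb_of_phase_eq_some hc]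
  simp [vsFTwo, h0]

def mass (w : Phase → ℝ) : ℝ := w bobDone + w bobSent + w bobQuiet

lemma mass_sum {ι : Type*} (s : Finset ι) (w : ι → Phase → ℝ) :
    mass (∑ i ∈ s, w i) = ∑ i ∈ s, mass (w i) := by
  simp [mass, Finset.sum_apply, Finset.sum_add_distrib]

noncomputable def nextBelief (p : ℝ) : Bool → (Phase → ℝ) → Phase → ℝ
  | true, w, bobSent => p * (2/3 * w bobSent + w bobQuiet)
  | true, _, _ => 0
  | false, w, bobDone => (1 - p) * (w bobDone + 2/3 * w bobSent + w bobQuiet)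
  | false, _, bobSent => 0
  | false, w, bobQuiet => (1 - p) * (1/3 * w bobSent)

lemma nextBelief_sum {ι : Type*} (s : Finset ι) (p : ℝ) (x : Bool) (w : ι → Phase → ℝ) :
    nextBelief p x (∑ i ∈ s, w i) = ∑ i ∈ s, nextBelief p x (w i) := by
  funext c
  cases x <;> cases c <;>
    simp [nextBelief, Finset.sum_apply, Finset.mul_sum, Finset.sum_add_distrib, mul_add]

/-- A lower bound for Alice's expected remaining latency: `3` from phase `bobSent`; from `bobDone`
and `bobQuiet` she either transmits now, costing `1` resp. `1 + 3`, or waits, costing `2` in both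
(Bob surely succeeds from `bobQuiet`), and she cannot tell these two phases apart. -/
def potential (w : Phase → ℝ) : ℝ :=
  3 * w bobSent + min (w bobDone + 4 * w bobQuiet) (2 * w bobDone + 2 * w bobQuiet)

lemma potential_single_bobSent : potential (Pi.single bobSent 1) = 3 := by
  simp [potential]

section Potential

variable {w : Phase → ℝ}

lemma potential_le_four_mul_mass (hw : ∀ c, 0 ≤ w c) : potential w ≤ 4 * mass w := by
  have := min_le_right (w bobDone + 4 * w bobQuiet) (2 * w bobDone + 2 * w bobQuiet)
  simp only [potential, mass]
  linarith [hw bobDone, hw bobSent, hw bobQuiet]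

lemma potential_le_mass_add_potential_nextBelief {p : ℝ} (hp₀ : 0 ≤ p) (hp₁ : p ≤ 1)
    (hw : ∀ c, 0 ≤ w c) :
    potential w ≤
      mass w + potential (nextBelief p true w) + potential (nextBelief p false w) := by
  simp only [potential, mass, nextBelief]
  set G := w bobDone
  set T := w bobSent
  set F := w bobQuiet
  have hmix : min (G + 4 * F) (2 * G + 2 * F) ≤ p * (G + 4 * F) + (1 - p) * (2 * G + 2 * F) := by
    nlinarith [min_le_left (G + 4 * F) (2 * G + 2 * F), min_le_right (G + 4 * F) (2 * G + 2 * F)]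
  have hwait : (1 - p) * (G + 2 * T + F) ≤
      min ((1 - p) * (G + 2/3 * T + F) + 4 * ((1 - p) * (1/3 * T)))
        (2 * ((1 - p) * (G + 2/3 * T + F)) + 2 * ((1 - p) * (1/3 * T))) :=
    le_min (by linarith)
      (by linarith [mul_nonneg (sub_nonneg.2 hp₁) (add_nonneg (hw bobDone) (hw bobQuiet))])
  simp only [mul_zero, add_zero, min_self]
  linarith

end Potential

noncomputable def phaseMass (g : Protocol) (h : Hist 2) (c : Phase) : ℝ :=
  if phase h = some c then histProb (vsFTwo g) h else 0

lemma mass_phaseMass (g : Protocol) (h : Hist 2) :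
    mass (phaseMass g h) = if pending h 0 then histProb (vsFTwo g) h else 0 := by
  unfold mass phaseMass phase
  split_ifs <;> simp_all

lemma sum_phaseMass_append (g : Protocol) (h : Hist 2) (x : Bool) :
    ∑ y, phaseMass g (h ++ [![x, y]]) = nextBelief (g (personal h 0)) x (phaseMass g h) := by
  funext c'
  simp only [Finset.sum_apply, Fintype.sum_bool, phaseMass, phase_append]
  rcases hc : phase h with _ | c
  · cases x <;> cases c' <;> simp [nextBelief, phaseMass, hc]
  · simp only [histProb_append, stepProb_vsFTwo hc, Option.bind_some]
    cases c <;> cases x <;> cases c' <;>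
      simp [Phase.next, nextBelief, coin, bobProb, phaseMass, hc] <;> ring

def zipHist {s : ℕ} (a b : Fin s → Bool) : Hist 2 := List.ofFn fun t => ![a t, b t]

lemma zipHist_snoc {s : ℕ} (a b : Fin s → Bool) (x y : Bool) :
    zipHist (Fin.snoc a x) (Fin.snoc b y) = zipHist a b ++ [![x, y]] := by
  rw [zipHist, List.ofFn_succ']
  simp [zipHist, List.concat_eq_append]

lemma personal_zipHist_zero {s : ℕ} (a b : Fin s → Bool) :
    personal (zipHist a b) 0 = List.ofFn a := by
  simp [personal, zipHist, List.map_ofFn, Function.comp_def]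

/-- `belief g a c` is the probability that Alice's own history is `a`, she is still pending, and
Bob is in phase `c`. -/
noncomputable def belief (g : Protocol) {s : ℕ} (a : Fin s → Bool) : Phase → ℝ :=
  ∑ b, phaseMass g (zipHist a b)

lemma belief_zero (g : Protocol) (a : Fin 0 → Bool) : belief g a = Pi.single bobSent 1 := by
  funext c
  cases c <;> simp [belief, zipHist, phaseMass, phase, pending, personal, histProb, contProb]

lemma belief_snoc (g : Protocol) {s : ℕ} (a : Fin s → Bool) (x : Bool) :
    belief g (Fin.snoc a x) = nextBelief (g (List.ofFn a)) x (belief g a) := by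
  simp only [belief, sum_fun_fin_succ (fun b => phaseMass g (zipHist (Fin.snoc a x) b)),
    zipHist_snoc, sum_phaseMass_append, personal_zipHist_zero, nextBelief_sum]

lemma belief_nonneg {g : Protocol} (hg : ValidProtocol g) {s : ℕ} (a : Fin s → Bool)
    (c : Phase) : 0 ≤ belief g a c := by
  rw [belief, Finset.sum_apply]
  refine Finset.sum_nonneg fun b _ => ?_
  unfold phaseMass
  split_ifs
  exacts [histProb_nonneg (validProtocol_vsFTwo hg) _, le_rfl]

lemma condPendProb_eq_sum_mass_belief (g : Protocol) (s : ℕ) :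
    condPendProb (vsFTwo g) [] 0 s = ∑ a : Fin s → Bool, mass (belief g a) := by
  simp only [condPendProb, List.nil_append, sum_fun_fin_two, belief, mass_sum, mass_phaseMass]
  rfl

lemma three_le_sum_condPendProb_add_sum_potential {g : Protocol} (hg : ValidProtocol g)
    (N : ℕ) :
    3 ≤ ∑ s ∈ Finset.range N, condPendProb (vsFTwo g) [] 0 s +
      ∑ a : Fin N → Bool, potential (belief g a) := by
  induction N with
  | zero => simp [belief_zero, potential_single_bobSent]
  | succ N ih =>
    have hstep : ∑ a : Fin N → Bool, potential (belief g a) ≤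
        condPendProb (vsFTwo g) [] 0 N + ∑ a : Fin (N + 1) → Bool, potential (belief g a) := by
      rw [condPendProb_eq_sum_mass_belief, sum_fun_fin_succ, ← Finset.sum_add_distrib]
      refine Finset.sum_le_sum fun a _ => ?_
      rw [Fintype.sum_bool, belief_snoc, belief_snoc, ← add_assoc]
      exact potential_le_mass_add_potential_nextBelief (hg _).1 (hg _).2 (belief_nonneg hg a)
    rw [Finset.sum_range_succ]
    linarith

lemma three_le_sum_condPendProb_add_four_mul {g : Protocol} (hg : ValidProtocol g) (N : ℕ) :
    3 ≤ ∑ s ∈ Finset.range N, condPendProb (vsFTwo g) [] 0 s +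
      4 * condPendProb (vsFTwo g) [] 0 N := by
  have hpot : ∑ a : Fin N → Bool, potential (belief g a) ≤
      4 * condPendProb (vsFTwo g) [] 0 N := by
    rw [condPendProb_eq_sum_mass_belief, Finset.mul_sum]
    exact Finset.sum_le_sum fun a _ => potential_le_four_mul_mass (belief_nonneg hg a)
  linarith [three_le_sum_condPendProb_add_sum_potential hg N]

/-- For `n = 2` players, if Bob (player `1`) uses protocol `fTwo`, then for
every acknowledgment-based protocol `g` of Alice (player `0`), Alice's unconditional
expected latency under the profile `(g, fTwo)` is at least `3`. -/
theorem two_player_best_response_lower_bound :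
    ∀ g : Protocol, ValidProtocol g →
      (3 : ℝ≥0∞) ≤ condLatency (fun i : Fin 2 => if i = 0 then g else fTwo) [] 0 := by
  intro g hg
  rw [condLatency_nil, ← ENNReal.ofReal_ofNat 3]
  exact ofReal_le_tsum_ofReal_of_le_sum_range_add
    (condPendProb_nonneg (validProtocol_vsFTwo hg) 0) (three_le_sum_condPendProb_add_four_mul hg)

end Contention
end

section
/- For all real p_A, p_E ∈ [0,1], the linear system k_A = 1 + (2/3)·p_A·k_A + (1 − p_A)·k_E and k_E = 1 + (1/3)·p_E·k_A + (1 − p_E) in the unknowns (k_A, k_E) has the unique real solution k_A = 3, k_E = 2. -/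
/-- For all `p_A, p_E ∈ [0,1]`, the linear system
`k_A = 1 + (2/3)·p_A·k_A + (1 − p_A)·k_E` and `k_E = 1 + (1/3)·p_E·k_A + (1 − p_E)`
in the unknowns `(k_A, k_E)` has the unique real solution `k_A = 3`, `k_E = 2`. -/
theorem hitting_time_system_unique_solution :
    ∀ pA pE : ℝ, pA ∈ Set.Icc (0 : ℝ) 1 → pE ∈ Set.Icc (0 : ℝ) 1 →
      ∀ kA kE : ℝ,
        (kA = 1 + (2 / 3) * pA * kA + (1 - pA) * kE ∧
         kE = 1 + (1 / 3) * pE * kA + (1 - pE)) ↔ (kA = 3 ∧ kE = 2) := by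
  rintro pA pE ⟨hA0, hA1⟩ ⟨hE0, hE1⟩ kA kE
  constructor
  · rintro ⟨h1, h2⟩
    have hd : 1 - 2 * pA / 3 - (1 - pA) * pE / 3 > 0 := by nlinarith
    have hkA : kA = 3 := by
      have : (kA - 3) * (1 - 2 * pA / 3 - (1 - pA) * pE / 3) = 0 := by nlinarith
      have := mul_eq_zero.mp this
      rcases this with h | h
      · linarith
      · linarith
    constructor
    · exact hkA
    · subst hkA; linarith
  · rintro ⟨h1, h2⟩; subst h1; subst h2; constructor <;> ring
end

section
/- For every real number p: if 2/3 < p < 1 then (2 − p) / (2p(1 − p)) > 3, and if 0 < p < 2/3 then 1/(1 − p) < (2 − p) / (2p(1 − p)). -/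
/-- For every real `p`: if `2/3 < p < 1` then `(2 − p)/(2p(1 − p)) > 3`,
and if `0 < p < 2/3` then `1/(1 − p) < (2 − p)/(2p(1 − p))`. -/
theorem latency_comparison_inequalities :
    ∀ p : ℝ,
      (2 / 3 < p → p < 1 → 3 < (2 - p) / (2 * p * (1 - p))) ∧
      (0 < p → p < 2 / 3 → 1 / (1 - p) < (2 - p) / (2 * p * (1 - p))) := by
  intro p
  constructor
  · intro h1 h2
    have hd : 0 < 2 * p * (1 - p) := by nlinarith
    rw [lt_div_iff₀ hd]
    nlinarith
  · intro h1 h2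
    have hd : 0 < 2 * p * (1 - p) := by nlinarith
    have hd2 : 0 < 1 - p := by nlinarith
    rw [div_lt_div_iff₀ hd2 hd]
    nlinarith
end

section
/- There do not exist a real number α and reals p₁, p₂, p₃ ∈ [0,1] with p₂ < 1 such that α = 1 + p₁·α, α = 2 + (1 − p₁)·p₂·α, and α = 3 + (1 − p₁)(1 − p₂)·p₃·α all hold. -/
/-- There do not exist a real `α` and reals `p₁, p₂, p₃ ∈ [0,1]` with
`p₂ < 1` such that `α = 1 + p₁·α`, `α = 2 + (1 − p₁)·p₂·α`, and
`α = 3 + (1 − p₁)(1 − p₂)·p₃·α` all hold. -/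
theorem no_stationary_equilibrium_with_p2_lt_one :
    ¬ ∃ (α p₁ p₂ p₃ : ℝ),
        p₁ ∈ Set.Icc (0 : ℝ) 1 ∧ p₂ ∈ Set.Icc (0 : ℝ) 1 ∧ p₃ ∈ Set.Icc (0 : ℝ) 1 ∧
        p₂ < 1 ∧
        α = 1 + p₁ * α ∧
        α = 2 + (1 - p₁) * p₂ * α ∧
        α = 3 + (1 - p₁) * (1 - p₂) * p₃ * α := by
  rintro ⟨α, p₁, p₂, p₃, ⟨h10, h11⟩, ⟨h20, h21⟩, ⟨h30, h31⟩, hp2, e1, e2, e3⟩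
  -- from e1: (1 - p₁) * α = 1
  have h1 : (1 - p₁) * α = 1 := by linarith [e1]; 
  have hα2 : α = 2 + p₂ := by nlinarith [h1, e2]
  have h3 : α = 3 + (1 - p₂) * p₃ := by nlinarith [h1, e3]
  nlinarith [mul_nonneg (by linarith : (0:ℝ) ≤ 1 - p₂) h30]
end
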